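/- Let c be a Coxeter element of the Coxeter group W of type G₂, and let w₁, w₂, w₃ : List (Fin 2) be three words each of which is a reduced word for c (i.e. cs.wordProd wⱼ = c and wⱼ has length 2 = ℓ(c)). Then the concatenation w₁ ++ w₂ ++ w₃ is a reduced word for c³: its product is c³ and its length 6 equals ℓ(c³). -/

import Mathlib

/-- The Coxeter system of type `G₂` on its Coxeter group `CoxeterMatrix.G₂.Group`. -/
def g2cs : CoxeterSystem CoxeterMatrix.G₂ CoxeterMatrix.G₂.Group :=
  CoxeterMatrix.G₂.toCoxeterSystem

/-- The simple reflections `s i` of the Coxeter group of type `G₂`. -/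
def g2s (i : Fin 2) : CoxeterMatrix.G₂.Group := g2cs.simple i

/-- Target values in the dihedral group of order 12. -/
def g2f : Fin 2 → DihedralGroup 6 := fun i => DihedralGroup.sr i.val

lemma g2f_liftable : CoxeterMatrix.G₂.IsLiftable g2f := by
  intro i i'
  fin_cases i <;> fin_cases i' <;> decide

/-- The homomorphism to the dihedral group of order 12. -/
def g2φ : CoxeterMatrix.G₂.Group →* DihedralGroup 6 :=
  g2cs.lift ⟨g2f, g2f_liftable⟩

lemma g2φ_simple (i : Fin 2) : g2φ (g2s i) = g2f i :=
  g2cs.lift_apply_simple g2f_liftable i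

lemma g2φ_wordProd (ω : List (Fin 2)) : g2φ (g2cs.wordProd ω) = (ω.map g2f).prod := by
  induction ω with
  | nil => simp [CoxeterSystem.wordProd_nil]
  | cons i t ih =>
    rw [CoxeterSystem.wordProd_cons, map_mul, List.map_cons, List.prod_cons, ih]
    exact congrArg (· * _) (g2φ_simple i)

lemma g2_short_words : ∀ k : Fin 6, ∀ v : List.Vector (Fin 2) k,
    ((v.toList).map g2f).prod ≠ DihedralGroup.r 3 := by decide

/-- If `w₁, w₂, w₃` are reduced words for a Coxeter element `c` of the Coxeter
group of type `G₂`, then their concatenation is a reduced word for `c³`: its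
product is `c³` and its length `6` equals `ℓ(c³)`. -/
theorem g2_concat_reduced_words_of_coxeterElement (c : CoxeterMatrix.G₂.Group)
    (hc : c = g2s 0 * g2s 1 ∨ c = g2s 1 * g2s 0)
    (w₁ w₂ w₃ : List (Fin 2))
    (h₁ : g2cs.wordProd w₁ = c ∧ w₁.length = 2)
    (h₂ : g2cs.wordProd w₂ = c ∧ w₂.length = 2)
    (h₃ : g2cs.wordProd w₃ = c ∧ w₃.length = 2) :
    g2cs.wordProd (w₁ ++ w₂ ++ w₃) = c ^ 3 ∧
      (w₁ ++ w₂ ++ w₃).length = 6 ∧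
      g2cs.length (c ^ 3) = 6 := by
  have hprod : g2cs.wordProd (w₁ ++ w₂ ++ w₃) = c ^ 3 := by
    rw [CoxeterSystem.wordProd_append, CoxeterSystem.wordProd_append,
      h₁.1, h₂.1, h₃.1]
    rw [pow_succ, pow_succ, pow_one]
  have hlen : (w₁ ++ w₂ ++ w₃).length = 6 := by
    simp [h₁.2, h₂.2, h₃.2]
  refine ⟨hprod, hlen, ?_⟩
  -- image of c^3 is r 3
  have himg : g2φ (c ^ 3) = DihedralGroup.r 3 := by
    rcases hc with rfl | rfl <;>
      · rw [map_pow, map_mul, g2φ_simple, g2φ_simple] <;> decide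
  -- upper bound
  have hle : g2cs.length (c ^ 3) ≤ 6 := by
    calc g2cs.length (c ^ 3) = g2cs.length (g2cs.wordProd (w₁ ++ w₂ ++ w₃)) := by rw [hprod]
    _ ≤ (w₁ ++ w₂ ++ w₃).length := g2cs.length_wordProd_le _
    _ = 6 := hlen
  -- lower bound
  by_contra hne
  have hlt : g2cs.length (c ^ 3) < 6 := lt_of_le_of_ne hle hne
  obtain ⟨ω, hωl, hωp⟩ := g2cs.exists_reduced_word (c ^ 3)
  have hωlt : ω.length < 6 := by rw [← (hωl : g2cs.length (g2cs.wordProd ω) = ω.length), ← hωp]; exact hlt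
  refine g2_short_words ⟨ω.length, hωlt⟩ ⟨ω, rfl⟩ ?_
  show ((ω.map g2f)).prod = _
  rw [← g2φ_wordProd, ← hωp, himg]
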